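/- Let h > 0 and let f, g : [0,1] → ℂ be continuous. Define the O_h^(1)-convolution (f ⋆ g)(x) = ∫_0^x f(x−t) g(t) dt + (1/h)·∫_x^1 f(1+x−t) g(t) dt for x ∈ [0,1]. Then for every j ∈ ℤ one has ∫_0^1 (f ⋆ g)(x)·h^{−x} e^{−2πi j x} dx = (∫_0^1 f(x)·h^{−x} e^{−2πi j x} dx)·(∫_0^1 g(x)·h^{−x} e^{−2πi j x} dx); that is, the L-Fourier coefficients of f ⋆ g are the products of those of f and g. -/

import Mathlib

/-!
The weight `h^{-x} e^{-2πijx}` is `e^{-cx}` with `e^c = h`. Multiplying `f ⋆ g` by it gives the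
`h = 1` convolution of `f e^{-cx}` and `g e^{-cx}`, the factor `1/h` being absorbed by `e^{-c}`.
For `h = 1` the convolution is the cyclic one, `∫_0^1 f(fract (x - t)) g(t) dt`, and Fubini with
the translation invariance of the integral of a 1-periodic function over a period splits its
integral into the product of the integrals of `f` and `g`.
-/

open Complex MeasureTheory Set

noncomputable section

/-- The `O_h^(1)`-convolution of two functions on `[0,1]`. -/
def LConv (h : ℝ) (f g : ℝ → ℂ) (x : ℝ) : ℂ :=
  (∫ t in (0:ℝ)..x, f (x - t) * g t) +
    (1 / (h : ℂ)) * ∫ t in x..(1:ℝ), f (1 + x - t) * g t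

/-- The `L`-Fourier coefficient `f̂(j) = ∫_0^1 f(x) h^{-x} e^{-2π i j x} dx`. -/
def LFourier (h : ℝ) (f : ℝ → ℂ) (j : ℤ) : ℂ :=
  ∫ x in (0:ℝ)..1,
    f x * Complex.exp (-((x : ℂ) * Real.log h)) *
      Complex.exp (-(2 * Real.pi * Complex.I * (j : ℂ) * (x : ℂ)))

theorem ContinuousOn.exists_continuous_eqOn_Icc {α β : Type*} [LinearOrder α]
    [TopologicalSpace α] [OrderTopology α] [TopologicalSpace β] {a b : α} (hab : a ≤ b)
    {f : α → β} (hf : ContinuousOn f (Icc a b)) : ∃ F : α → β, Continuous F ∧ EqOn f F (Icc a b) :=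
  ⟨fun x => f (projIcc a b hab x),
    hf.comp_continuous (continuous_subtype_val.comp continuous_projIcc)
      fun x => (projIcc a b hab x).2,
    fun x hx => by simp only [projIcc_of_mem hab hx]⟩

section Congr

variable {h : ℝ} {f g F G : ℝ → ℂ}

theorem LConv_congr (hfF : EqOn f F (Icc 0 1)) (hgG : EqOn g G (Icc 0 1)) :
    EqOn (LConv h f g) (LConv h F G) (Icc 0 1) := by
  intro x ⟨hx0, hx1⟩
  unfold LConv
  congr 1
  · refine intervalIntegral.integral_congr fun t ht => ?_
    rw [uIcc_of_le hx0] at ht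
    rw [hfF (x := x - t) ⟨sub_nonneg.2 ht.2, by linarith [ht.1]⟩, hgG ⟨ht.1, ht.2.trans hx1⟩]
  · congr 1
    refine intervalIntegral.integral_congr fun t ht => ?_
    rw [uIcc_of_le hx1] at ht
    rw [hfF (x := 1 + x - t) ⟨by linarith [ht.2], by linarith [ht.1]⟩, hgG ⟨hx0.trans ht.1, ht.2⟩]

theorem LFourier_congr (hfF : EqOn f F (Icc 0 1)) (j : ℤ) : LFourier h f j = LFourier h F j := by
  refine intervalIntegral.integral_congr fun x hx => ?_
  rw [uIcc_of_le zero_le_one] at hx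
  simp only [hfF hx]

end Congr

theorem LFourier_eq_integral_mul_exp (h : ℝ) (f : ℝ → ℂ) (j : ℤ) :
    LFourier h f j = ∫ x in (0:ℝ)..1, f x * exp (-((Real.log h + 2 * Real.pi * I * j) * x)) := by
  refine intervalIntegral.integral_congr fun x _ => ?_
  simp only [mul_assoc, ← exp_add]
  ring_nf

theorem exp_log_add_two_pi_I_mul_int {h : ℝ} (hh : 0 < h) (j : ℤ) :
    exp (Real.log h + 2 * Real.pi * I * j) = h := by
  rw [exp_add, ← ofReal_exp, Real.exp_log hh, mul_comm _ (j : ℂ), exp_int_mul_two_pi_mul_I,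
    mul_one]

theorem LConv_mul_exp {h : ℝ} {c : ℂ} (hc : exp c = h) (f g : ℝ → ℂ) (x : ℝ) :
    LConv h f g x * exp (-(c * x)) =
      LConv 1 (fun y => f y * exp (-(c * y))) (fun y => g y * exp (-(c * y))) x := by
  have hE (t : ℝ) : exp (-(c * x)) = exp (-(c * ↑(x - t))) * exp (-(c * t)) := by
    rw [← exp_add]; push_cast; ring_nf
  have hE' (t : ℝ) : 1 / (h : ℂ) * exp (-(c * x)) =
      exp (-(c * ↑(1 + x - t))) * exp (-(c * t)) := by
    rw [← exp_add, ← hc, one_div, ← exp_neg, ← exp_add]; push_cast; ring_nf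
  simp only [LConv, ofReal_one, div_one, one_mul, add_mul, mul_assoc,
    ← intervalIntegral.integral_mul_const]
  congr 1
  · refine intervalIntegral.integral_congr fun t _ => ?_
    linear_combination f (x - t) * g t * hE t
  · rw [← intervalIntegral.integral_const_mul]
    refine intervalIntegral.integral_congr fun t _ => ?_
    linear_combination f (1 + x - t) * g t * hE' t

section CyclicConvolution

variable {φ ψ : ℝ → ℂ}

theorem LConv_one_eq_integral_fract (hφ : Continuous φ) (hψ : Continuous ψ) {x : ℝ}
    (hx : x ∈ Icc (0:ℝ) 1) :
    LConv 1 φ ψ x = ∫ t in (0:ℝ)..1, φ (Int.fract (x - t)) * ψ t := by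
  obtain ⟨hx0, hx1⟩ := hx
  have hlow : EqOn (fun t => φ (x - t) * ψ t) (fun t => φ (Int.fract (x - t)) * ψ t)
      (uIoo 0 x) := by
    intro t ht
    rw [uIoo_of_le hx0] at ht
    simp only [Int.fract_eq_self (a := x - t) |>.2 ⟨by linarith [ht.2], by linarith [ht.1]⟩]
  have hhigh : EqOn (fun t => φ (1 + x - t) * ψ t) (fun t => φ (Int.fract (x - t)) * ψ t)
      (uIoo x 1) := by
    intro t ht
    rw [uIoo_of_le hx1] at ht
    have hfract : Int.fract (x - t) = 1 + x - t := by
      rw [← Int.fract_add_one, Int.fract_eq_self.2 ⟨by linarith [ht.2], by linarith [ht.1]⟩]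
      ring
    simp only [hfract]
  have ilow : IntervalIntegrable (fun t => φ (x - t) * ψ t) volume 0 x :=
    Continuous.intervalIntegrable (by fun_prop) _ _
  have ihigh : IntervalIntegrable (fun t => φ (1 + x - t) * ψ t) volume x 1 :=
    Continuous.intervalIntegrable (by fun_prop) _ _
  rw [← intervalIntegral.integral_add_adjacent_intervals (b := x)
    (ilow.congr_uIoo hlow) (ihigh.congr_uIoo hhigh),
    ← intervalIntegral.integral_congr_uIoo hlow, ← intervalIntegral.integral_congr_uIoo hhigh]
  simp only [LConv, ofReal_one, div_one, one_mul]

theorem integral_comp_fract_sub (φ : ℝ → ℂ) (t : ℝ) :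
    ∫ x in (0:ℝ)..1, φ (Int.fract (x - t)) = ∫ x in (0:ℝ)..1, φ x := by
  have hper : Function.Periodic (fun y => φ (Int.fract y)) 1 := fun y => by
    simp only [Int.fract_add_one]
  calc ∫ x in (0:ℝ)..1, φ (Int.fract (x - t))
      = ∫ x in -t..-t + 1, φ (Int.fract x) := by
        rw [intervalIntegral.integral_comp_sub_right (fun y => φ (Int.fract y)), zero_sub,
          sub_eq_neg_add]
    _ = ∫ x in (0:ℝ)..0 + 1, φ (Int.fract x) := hper.intervalIntegral_add_eq _ _
    _ = ∫ x in (0:ℝ)..1, φ x := by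
      rw [zero_add]
      refine intervalIntegral.integral_congr_uIoo fun x hx => ?_
      rw [uIoo_of_le zero_le_one] at hx
      simp only [Int.fract_eq_self.2 ⟨hx.1.le, hx.2⟩]

theorem integrableOn_fract_sub_mul (hφ : Continuous φ) (hψ : Continuous ψ) :
    IntegrableOn (Function.uncurry fun x t => φ (Int.fract (x - t)) * ψ t)
      (uIoc 0 1 ×ˢ uIoc 0 1) := by
  obtain ⟨Cφ, hCφ⟩ := isCompact_Icc.exists_bound_of_continuousOn (hφ.continuousOn (s := Icc 0 1))
  obtain ⟨Cψ, hCψ⟩ := isCompact_Icc.exists_bound_of_continuousOn (hψ.continuousOn (s := Icc 0 1))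
  rw [uIoc_of_le zero_le_one]
  refine IntegrableOn.of_bound
    ((Metric.isBounded_Ioc 0 1).prod (Metric.isBounded_Ioc 0 1)).measure_lt_top
    (by fun_prop : Measurable _).aestronglyMeasurable (Cφ * Cψ)
    (ae_restrict_of_forall_mem (measurableSet_Ioc.prod measurableSet_Ioc) fun p hp => ?_)
  rw [Function.uncurry_apply_pair, norm_mul]
  exact mul_le_mul (hCφ _ ⟨Int.fract_nonneg _, (Int.fract_lt_one _).le⟩)
    (hCψ _ (Ioc_subset_Icc_self hp.2)) (norm_nonneg _) ((norm_nonneg _).trans (hCφ 0 (by simp)))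

theorem integral_LConv_one (hφ : Continuous φ) (hψ : Continuous ψ) :
    ∫ x in (0:ℝ)..1, LConv 1 φ ψ x = (∫ x in (0:ℝ)..1, φ x) * ∫ t in (0:ℝ)..1, ψ t := by
  calc ∫ x in (0:ℝ)..1, LConv 1 φ ψ x
      = ∫ x in (0:ℝ)..1, ∫ t in (0:ℝ)..1, φ (Int.fract (x - t)) * ψ t :=
        intervalIntegral.integral_congr fun x hx =>
          LConv_one_eq_integral_fract hφ hψ (by rwa [uIcc_of_le zero_le_one] at hx)
    _ = ∫ t in (0:ℝ)..1, ∫ x in (0:ℝ)..1, φ (Int.fract (x - t)) * ψ t :=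
        intervalIntegral_intervalIntegral_swap (integrableOn_fract_sub_mul hφ hψ)
    _ = ∫ t in (0:ℝ)..1, (∫ x in (0:ℝ)..1, φ x) * ψ t := by
        simp only [intervalIntegral.integral_mul_const, integral_comp_fract_sub]
    _ = (∫ x in (0:ℝ)..1, φ x) * ∫ t in (0:ℝ)..1, ψ t := intervalIntegral.integral_const_mul _ _

end CyclicConvolution

theorem stmt_4 (h : ℝ) (hh : 0 < h) (f g : ℝ → ℂ)
    (hf : ContinuousOn f (Icc 0 1)) (hg : ContinuousOn g (Icc 0 1)) :
    ∀ j : ℤ, LFourier h (LConv h f g) j = LFourier h f j * LFourier h g j := by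
  intro j
  obtain ⟨F, hFc, hfF⟩ := hf.exists_continuous_eqOn_Icc zero_le_one
  obtain ⟨G, hGc, hgG⟩ := hg.exists_continuous_eqOn_Icc zero_le_one
  rw [LFourier_congr (LConv_congr hfF hgG), LFourier_congr hfF, LFourier_congr hgG]
  simp only [LFourier_eq_integral_mul_exp, LConv_mul_exp (exp_log_add_two_pi_I_mul_int hh j)]
  exact integral_LConv_one (by fun_prop) (by fun_prop)
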